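/- The q-Gauss summation formula: for |q| < 1 and |c/(ab)| < 1, ∑_{n=0}^∞ ((a;q)_n (b;q)_n / ((q;q)_n (c;q)_n)) (c/(ab))^n = (c/a; q)_∞ (c/b; q)_∞ / ((c;q)_∞ (c/(ab); q)_∞), provided c is not of the form q^{-m} for a nonnegative integer m. -/

import Mathlib

/-- Finite q-Pochhammer symbol: (a;q)_n = ∏_{k=0}^{n-1} (1 - a q^k). -/
noncomputable def qp (a q : ℂ) (n : ℕ) : ℂ := ∏ k ∈ Finset.range n, (1 - a * q ^ k)

/-- Infinite q-Pochhammer symbol: (a;q)_∞ = ∏_{k=0}^∞ (1 - a q^k). -/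
noncomputable def qpInf (a q : ℂ) : ℂ := ∏' k : ℕ, (1 - a * q ^ k)

/-!
Put `c = abz` and let `φ(c, z)` be the series `₂φ₁(a, b; c; q, z)`. Comparing consecutive terms
gives the contiguous relation `(1 - c)(1 - z) φ(c, z) = (1 - az)(1 - bz) φ(cq, zq)`, the two sides
differing by a telescoping series. Iterating it `N` times gives
`(c;q)_N (z;q)_N φ(c, z) = (az;q)_N (bz;q)_N φ(cq^N, zq^N)`, and `φ(cq^N, zq^N) → 1` because its
`n`-th term is bounded by `K (|z| |q|^N)^n` with `K` independent of `N`.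
-/

open Filter Topology Finset

theorem hasSum_sub_of_tendsto_zero {G : Type*} [AddCommGroup G] [TopologicalSpace G]
    [IsTopologicalAddGroup G] [T2Space G] {u : ℕ → G} (hu : Tendsto u atTop (𝓝 0))
    (hs : Summable fun n => u (n + 1) - u n) : HasSum (fun n => u (n + 1) - u n) (-u 0) := by
  rw [hs.hasSum_iff_tendsto_nat]
  simp only [sum_range_sub]
  simpa using hu.sub_const (u 0)

theorem qp_zero (a q : ℂ) : qp a q 0 = 1 := prod_range_zero _

theorem qp_succ (a q : ℂ) (n : ℕ) : qp a q (n + 1) = qp a q n * (1 - a * q ^ n) :=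
  prod_range_succ _ n

theorem qp_add (a q : ℂ) (m n : ℕ) : qp a q (m + n) = qp a q m * qp (a * q ^ m) q n := by
  simp only [qp, prod_range_add, pow_add, mul_assoc]

theorem qp_succ' (a q : ℂ) (n : ℕ) : qp a q (n + 1) = (1 - a) * qp (a * q) q n := by
  rw [add_comm, qp_add, pow_one]
  simp [qp]

theorem qp_ne_zero {a q : ℂ} (h : ∀ k : ℕ, a * q ^ k ≠ 1) (n : ℕ) : qp a q n ≠ 0 :=
  prod_ne_zero_iff.2 fun k _ => sub_ne_zero.2 (h k).symm

theorem norm_mul_pow_lt_one {a q : ℂ} (hq : ‖q‖ < 1) (ha : ‖a‖ < 1) (k : ℕ) :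
    ‖a * q ^ k‖ < 1 := by
  rw [norm_mul, norm_pow]
  exact (mul_le_of_le_one_right (norm_nonneg a) (pow_le_one₀ (norm_nonneg q) hq.le)).trans_lt ha

theorem mul_pow_ne_one {a q : ℂ} (hq : ‖q‖ < 1) (ha : ‖a‖ < 1) (k : ℕ) : a * q ^ k ≠ 1 :=
  fun h => by simpa [h] using norm_mul_pow_lt_one hq ha k

section Convergence

variable {q : ℂ}

theorem summable_norm_mul_pow (hq : ‖q‖ < 1) (a : ℂ) : Summable fun k : ℕ => ‖a * q ^ k‖ := by
  simpa only [norm_mul, norm_pow] using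
    (summable_geometric_of_lt_one (norm_nonneg q) hq).mul_left ‖a‖

theorem multipliable_one_sub_mul_pow (hq : ‖q‖ < 1) (a : ℂ) :
    Multipliable fun k : ℕ => 1 - a * q ^ k := by
  simpa only [sub_eq_add_neg] using multipliable_one_add_of_summable (f := fun k => -(a * q ^ k))
    (by simpa using summable_norm_mul_pow hq a)

theorem tendsto_qp (hq : ‖q‖ < 1) (a : ℂ) : Tendsto (qp a q) atTop (𝓝 (qpInf a q)) :=
  (multipliable_one_sub_mul_pow hq a).hasProd.tendsto_prod_nat

theorem qpInf_ne_zero (hq : ‖q‖ < 1) {a : ℂ} (h : ∀ k : ℕ, a * q ^ k ≠ 1) : qpInf a q ≠ 0 := by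
  simpa only [qpInf, sub_eq_add_neg] using
    tprod_one_add_ne_zero_of_summable (f := fun k => -(a * q ^ k))
    (fun k => by simpa [← sub_eq_add_neg, sub_eq_zero] using (h k).symm)
    (by simpa using summable_norm_mul_pow hq a)

theorem exists_norm_qp_le (hq : ‖q‖ < 1) (a : ℂ) : ∃ C, ∀ n, ‖qp a q n‖ ≤ C := by
  obtain ⟨C, hC⟩ :=
    isBounded_iff_forall_norm_le.1 (Metric.isBounded_range_of_tendsto _ (tendsto_qp hq a))
  exact ⟨C, fun n => hC _ ⟨n, rfl⟩⟩

theorem exists_norm_inv_qp_le (hq : ‖q‖ < 1) {a : ℂ} (h : ∀ k : ℕ, a * q ^ k ≠ 1) :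
    ∃ C, ∀ n, ‖(qp a q n)⁻¹‖ ≤ C := by
  obtain ⟨C, hC⟩ := isBounded_iff_forall_norm_le.1 (Metric.isBounded_range_of_tendsto _
    ((tendsto_qp hq a).inv₀ (qpInf_ne_zero hq h)))
  exact ⟨C, fun n => hC _ ⟨n, rfl⟩⟩

theorem exists_norm_inv_qp_shift_le (hq : ‖q‖ < 1) {a : ℂ} (h : ∀ k : ℕ, a * q ^ k ≠ 1) :
    ∃ C, ∀ m n, ‖(qp (a * q ^ m) q n)⁻¹‖ ≤ C := by
  obtain ⟨C₁, hC₁⟩ := exists_norm_qp_le hq a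
  obtain ⟨C₂, hC₂⟩ := exists_norm_inv_qp_le hq h
  refine ⟨C₁ * C₂, fun m n => ?_⟩
  have hshift : (qp (a * q ^ m) q n)⁻¹ = qp a q m * (qp a q (m + n))⁻¹ := by
    rw [qp_add, mul_inv, mul_inv_cancel_left₀ (qp_ne_zero h m)]
  rw [hshift, norm_mul]
  exact mul_le_mul (hC₁ m) (hC₂ _) (norm_nonneg _) ((norm_nonneg _).trans (hC₁ m))

end Convergence

noncomputable def twoPhiOneTerm (a b c q z : ℂ) (n : ℕ) : ℂ :=
  qp a q n * qp b q n / (qp q q n * qp c q n) * z ^ n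

theorem exists_norm_twoPhiOneTerm_shift_le {c q : ℂ} (hq : ‖q‖ < 1) (hc : ∀ k : ℕ, c * q ^ k ≠ 1)
    (a b z : ℂ) :
    ∃ K, ∀ m n, ‖twoPhiOneTerm a b (c * q ^ m) q (z * q ^ m) n‖ ≤ K * (‖z‖ * ‖q‖ ^ m) ^ n := by
  obtain ⟨A, hA⟩ := exists_norm_qp_le hq a
  obtain ⟨B, hB⟩ := exists_norm_qp_le hq b
  obtain ⟨Q, hQ⟩ := exists_norm_inv_qp_le hq (mul_pow_ne_one hq hq)
  obtain ⟨C, hC⟩ := exists_norm_inv_qp_shift_le hq hc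
  refine ⟨A * B * (Q * C), fun m n => ?_⟩
  rw [twoPhiOneTerm, div_eq_mul_inv, mul_inv, norm_mul, norm_mul, norm_mul, norm_mul, norm_pow,
    norm_mul, norm_pow]
  have hA0 : 0 ≤ A := (norm_nonneg _).trans (hA 0)
  have hB0 : 0 ≤ B := (norm_nonneg _).trans (hB 0)
  have hQ0 : 0 ≤ Q := (norm_nonneg _).trans (hQ 0)
  gcongr
  exacts [hA n, hB n, hQ n, hC m n]

section TwoPhiOne

variable {a b c q z : ℂ}

theorem summable_twoPhiOneTerm (hq : ‖q‖ < 1) (hc : ∀ k : ℕ, c * q ^ k ≠ 1) (hz : ‖z‖ < 1) :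
    Summable (twoPhiOneTerm a b c q z) := by
  obtain ⟨K, hK⟩ := exists_norm_twoPhiOneTerm_shift_le hq hc a b z
  refine .of_norm_bounded ((summable_geometric_of_lt_one (norm_nonneg z) hz).mul_left K) fun n => ?_
  simpa using hK 0 n

theorem tendsto_tsum_twoPhiOneTerm_shift (hq : ‖q‖ < 1) (hc : ∀ k : ℕ, c * q ^ k ≠ 1)
    (hz : ‖z‖ < 1) :
    Tendsto (fun m => ∑' n, twoPhiOneTerm a b (c * q ^ m) q (z * q ^ m) n) atTop (𝓝 1) := by
  obtain ⟨K, hK⟩ := exists_norm_twoPhiOneTerm_shift_le hq hc a b z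
  have hK0 : 0 ≤ K := by simpa using (norm_nonneg _).trans (hK 0 0)
  rw [← tsum_ite_eq (0 : ℕ) fun _ => (1 : ℂ)]
  refine tendsto_tsum_of_dominated_convergence (bound := fun n => K * ‖z‖ ^ n)
    ((summable_geometric_of_lt_one (norm_nonneg z) hz).mul_left K) (fun n => ?_) ?_
  · rcases n with _ | n
    · simp [twoPhiOneTerm, qp_zero]
    · have h := (((tendsto_pow_atTop_nhds_zero_of_lt_one (norm_nonneg _) hq).const_mul ‖z‖).pow
        (n + 1)).const_mul K
      simp only [mul_zero, zero_pow n.succ_ne_zero] at h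
      simpa using squeeze_zero_norm (hK · (n + 1)) h
  · refine .of_forall fun m n => (hK m n).trans ?_
    gcongr
    exact mul_le_of_le_one_right (norm_nonneg z) (pow_le_one₀ (norm_nonneg q) hq.le)

theorem twoPhiOneTerm_contiguous (hq : ∀ k : ℕ, q * q ^ k ≠ 1) (hc : ∀ k : ℕ, c * q ^ k ≠ 1)
    (habz : c = a * b * z) (n : ℕ) :
    (1 - c) * (1 - q ^ (n + 1)) * twoPhiOneTerm a b c q z (n + 1) -
        (1 - c) * (1 - q ^ n) * twoPhiOneTerm a b c q z n =
      (1 - a * z) * (1 - b * z) * twoPhiOneTerm a b (c * q) q (z * q) n -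
        (1 - c) * (1 - z) * twoPhiOneTerm a b c q z n := by
  have hq1 : 1 - q * q ^ n ≠ 0 := sub_ne_zero.2 (hq n).symm
  have hc1 : 1 - c * q ^ n ≠ 0 := sub_ne_zero.2 (hc n).symm
  have hc0 : 1 - c ≠ 0 := sub_ne_zero.2 (by simpa using (hc 0).symm)
  have hcq : qp (c * q) q n = qp c q n * (1 - c * q ^ n) / (1 - c) := by
    rw [← qp_succ, qp_succ', mul_div_cancel_left₀ _ hc0]
  simp only [twoPhiOneTerm, qp_succ, hcq, pow_succ', mul_pow]
  field_simp
  rw [habz]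
  ring

theorem tsum_twoPhiOneTerm_contiguous (hq : ‖q‖ < 1) (hc : ∀ k : ℕ, c * q ^ k ≠ 1)
    (hz : ‖z‖ < 1) (habz : c = a * b * z) :
    (1 - c) * (1 - z) * ∑' n, twoPhiOneTerm a b c q z n =
      (1 - a * z) * (1 - b * z) * ∑' n, twoPhiOneTerm a b (c * q) q (z * q) n := by
  have hcq : ∀ k : ℕ, c * q * q ^ k ≠ 1 := fun k => by
    simpa [pow_succ', mul_assoc] using hc (k + 1)
  have hzq : ‖z * q‖ < 1 := by simpa using norm_mul_pow_lt_one hq hz 1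
  have hs := summable_twoPhiOneTerm (a := a) (b := b) hq hc hz
  have hs' := summable_twoPhiOneTerm (a := a) (b := b) hq hcq hzq
  have hu :
      Tendsto (fun n => (1 - c) * (1 - q ^ n) * twoPhiOneTerm a b c q z n) atTop (𝓝 0) := by
    simpa using (((tendsto_pow_atTop_nhds_zero_of_norm_lt_one hq).const_sub 1).const_mul
      (1 - c)).mul hs.tendsto_atTop_zero
  have hcontig :=
    funext (twoPhiOneTerm_contiguous (a := a) (b := b) (mul_pow_ne_one hq hq) hc habz)
  have hdiff := (hs'.hasSum.mul_left ((1 - a * z) * (1 - b * z))).sub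
    (hs.hasSum.mul_left ((1 - c) * (1 - z)))
  have htel := hasSum_sub_of_tendsto_zero hu (hcontig ▸ hdiff.summable)
  rw [hcontig, pow_zero, sub_self, mul_zero, zero_mul, neg_zero] at htel
  linear_combination -hdiff.unique htel

theorem qp_mul_tsum_twoPhiOneTerm_eq_shift (hq : ‖q‖ < 1) (hc : ∀ k : ℕ, c * q ^ k ≠ 1)
    (hz : ‖z‖ < 1) (habz : c = a * b * z) (N : ℕ) :
    qp c q N * qp z q N * ∑' n, twoPhiOneTerm a b c q z n =
      qp (a * z) q N * qp (b * z) q N *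
        ∑' n, twoPhiOneTerm a b (c * q ^ N) q (z * q ^ N) n := by
  induction N with
  | zero => simp [qp_zero]
  | succ N ih =>
    have hstep := tsum_twoPhiOneTerm_contiguous (a := a) (b := b) (c := c * q ^ N) hq
      (fun k => by simpa [pow_add, mul_assoc] using hc (N + k)) (norm_mul_pow_lt_one hq hz N)
      (by rw [habz]; ring)
    rw [mul_assoc c, mul_assoc z, ← pow_succ] at hstep
    simp only [qp_succ]
    linear_combination
      (1 - c * q ^ N) * (1 - z * q ^ N) * ih + qp (a * z) q N * qp (b * z) q N * hstep

end TwoPhiOne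

theorem hasSum_twoPhiOneTerm {a b c q z : ℂ} (hq : ‖q‖ < 1) (hc : ∀ k : ℕ, c * q ^ k ≠ 1)
    (hz : ‖z‖ < 1) (habz : c = a * b * z) :
    HasSum (twoPhiOneTerm a b c q z)
      (qpInf (a * z) q * qpInf (b * z) q / (qpInf c q * qpInf z q)) := by
  have hlim := ((tendsto_qp hq (a * z)).mul (tendsto_qp hq (b * z))).mul
    (tendsto_tsum_twoPhiOneTerm_shift (a := a) (b := b) hq hc hz)
  simp only [← qp_mul_tsum_twoPhiOneTerm_eq_shift hq hc hz habz, mul_one] at hlim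
  have hinf := tendsto_nhds_unique (((tendsto_qp hq c).mul (tendsto_qp hq z)).mul_const _) hlim
  rw [← hinf, mul_div_cancel_left₀ _
    (mul_ne_zero (qpInf_ne_zero hq hc) (qpInf_ne_zero hq (mul_pow_ne_one hq hz)))]
  exact (summable_twoPhiOneTerm hq hc hz).hasSum

/-- The q-Gauss summation formula. -/
theorem q_gauss_summation (q a b c : ℂ) (hq : ‖q‖ < 1)
    (ha : a ≠ 0) (hb : b ≠ 0)
    (hz : ‖c / (a * b)‖ < 1)
    (hc : ∀ m : ℕ, c ≠ q ^ (-(m : ℤ))) :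
    HasSum (fun n : ℕ => qp a q n * qp b q n / (qp q q n * qp c q n) * (c / (a * b)) ^ n)
      (qpInf (c / a) q * qpInf (c / b) q / (qpInf c q * qpInf (c / (a * b)) q)) := by
  have hcq : ∀ k : ℕ, c * q ^ k ≠ 1 := fun k h =>
    hc k (by rw [zpow_neg, zpow_natCast]; exact eq_inv_of_mul_eq_one_left h)
  have habz : c = a * b * (c / (a * b)) := by field_simp
  have hca : c / a = b * (c / (a * b)) := by field_simp
  have hcb : c / b = a * (c / (a * b)) := by field_simp
  rw [hca, hcb, mul_comm (qpInf _ q)]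
  exact hasSum_twoPhiOneTerm hq hcq hz habz
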